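/- For a nontrivial element g ∈ Γ, the set of boundary points fixed by g acting on Ω contains at most the two points g^{+∞} = ggg⋯ and g^{−∞} = g⁻¹g⁻¹g⁻¹⋯ (interpreted as reduced infinite words); in particular the fixed-point set is finite. -/

import Mathlib

/-!
Reducing `g ω` writes `g = u v` where `ω = v⁻¹ r` and `g ω = u r`. If `ω` is fixed, comparing
`u r = v⁻¹ r` gives `g = p c p⁻¹` with `c` nonempty and cyclically reduced, and `r = c r` or
`r = c⁻¹ r`, i.e. `ω = p c^∞ = g^{+∞}` or `ω = p (c⁻¹)^∞ = g^{-∞}`. Such a decomposition of `g` is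
unique, so all fixed points lie among these two.
-/

open MeasureTheory
open scoped ENNReal

/-- A directed letter: generators of `ℤ₂ * ⋯ * ℤ₂ * ℤ * ⋯ * ℤ` (s copies of ℤ₂,
t copies of ℤ) together with the inverses of the infinite-order generators. -/
abbrev Letter (s t : ℕ) := Sum (Fin s) (Fin t × Bool)

/-- Formal inverse of a letter. -/
def Letter.inv {s t : ℕ} : Letter s t → Letter s t
  | .inl i => .inl i
  | .inr (j, b) => .inr (j, !b)

/-- A list of letters is a reduced word if no letter is followed by its inverse. -/
def RedWord {s t : ℕ} (w : List (Letter s t)) : Prop :=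
  w.Chain' (fun a b => b ≠ a.inv)

/-- The boundary of the tree: semi-infinite reduced words. -/
def Boundary (s t : ℕ) : Type := {ω : ℕ → Letter s t // ∀ k, ω (k + 1) ≠ (ω k).inv}

/-- The cylinder set of boundary points beginning with the word `x`. -/
def cyl {s t : ℕ} (x : List (Letter s t)) : Set (Boundary s t) :=
  {ω | ∀ i, (h : i < x.length) → ω.1 i = x.get ⟨i, h⟩}

/-- The Borel σ-algebra on the boundary, generated by the (nontrivial) cylinder sets. -/
instance {s t : ℕ} : MeasurableSpace (Boundary s t) :=
  MeasurableSpace.generateFrom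
    {S | ∃ x : List (Letter s t), RedWord x ∧ x ≠ [] ∧ S = cyl x}

/-- The shift, deleting the first letter of a boundary word. -/
def shift {s t : ℕ} (ω : Boundary s t) : Boundary s t :=
  ⟨fun k => ω.1 (k + 1), fun k => ω.2 (k + 1)⟩

/-- Left multiplication of a boundary word by a single letter, with cancellation. -/
def prepend {s t : ℕ} (a : Letter s t) (ω : Boundary s t) : Boundary s t :=
  if h : ω.1 0 = a.inv then shift ω
  else ⟨fun k => match k with
        | 0 => a
        | k + 1 => ω.1 k,
      by
        intro k
        match k with
        | 0 => simpa using h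
        | k + 1 => exact ω.2 k⟩

/-- The action of a word `w ∈ Γ` on the boundary by left multiplication and reduction. -/
def act {s t : ℕ} (w : List (Letter s t)) (ω : Boundary s t) : Boundary s t :=
  w.foldr prepend ω

/-- The reduced word representing the inverse group element. -/
def invWord {s t : ℕ} (w : List (Letter s t)) : List (Letter s t) :=
  (w.reverse).map Letter.inv

section Streams

variable {α : Type*}

theorem List.eq_of_append_eq_of_head?_ne {p p' x y x' y' : List α}
    (h₁ : p ++ x = p' ++ x') (h₂ : p ++ y = p' ++ y')
    (hxy : x.head? ≠ y.head?) (hxy' : x'.head? ≠ y'.head?) : p = p' := by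
  induction p generalizing p' with
  | nil =>
    cases p' with
    | nil => rfl
    | cons b q => subst h₁ h₂; simp at hxy
  | cons a p ih =>
    cases p' with
    | nil => subst h₁ h₂; simp at hxy'
    | cons b q =>
      simp only [List.cons_append, List.cons.injEq] at h₁ h₂
      rw [h₁.1, ih h₁.2 h₂.2]

theorem Stream'.exists_eq_append_of_append_eq_append {l₁ l₂ : List α} {r₁ r₂ : Stream' α}
    (h : l₁ ++ₛ r₁ = l₂ ++ₛ r₂) (hl : l₁.length ≤ l₂.length) :
    ∃ c, l₂ = l₁ ++ c ∧ r₁ = c ++ₛ r₂ := by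
  induction l₁ generalizing l₂ with
  | nil => exact ⟨l₂, rfl, h⟩
  | cons a l₁ ih =>
    cases l₂ with
    | nil => simp at hl
    | cons b l₂ =>
      rw [Stream'.cons_append_stream, Stream'.cons_append_stream] at h
      obtain ⟨rfl, htail⟩ := Stream'.cons_injective2 h
      obtain ⟨c, rfl, hr⟩ := ih htail (by simpa using hl)
      exact ⟨c, rfl, hr⟩

theorem Stream'.eq_cycle_of_eq_append {c : List α} (hc : c ≠ []) {r : Stream' α}
    (hr : r = c ++ₛ r) : r = Stream'.cycle c hc := by
  refine Stream'.ext fun n => ?_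
  induction n using Nat.strong_induction_on with
  | _ n ih =>
    rw [hr, Stream'.cycle_eq c hc]
    rcases lt_or_ge n c.length with hn | hn
    · rw [Stream'.get_append_left _ _ _ hn, Stream'.get_append_left _ _ _ hn]
    · obtain ⟨m, rfl⟩ := Nat.exists_eq_add_of_le hn
      rw [Stream'.get_append_right, Stream'.get_append_right]
      exact ih m (by simpa using List.length_pos_iff.2 hc)

end Streams

theorem Function.Injective.exists_subset_pair {α β : Type*} [Nonempty α] {f : α → β}
    (hf : f.Injective) {S : Set α} {a b : β} (h : ∀ x ∈ S, f x = a ∨ f x = b) :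
    ∃ p q : α, S ⊆ {p, q} := by
  refine ⟨Function.invFun f a, Function.invFun f b, fun x hx => ?_⟩
  rcases h x hx with rfl | rfl
  · exact Or.inl (Function.leftInverse_invFun hf x).symm
  · exact Or.inr (Function.leftInverse_invFun hf x).symm

section Words

variable {s t : ℕ}

theorem redWord_iff {w : List (Letter s t)} : RedWord w ↔ w.IsChain (fun a b => b ≠ a.inv) :=
  Iff.rfl

@[simp]
theorem Letter.inv_inv (a : Letter s t) : a.inv.inv = a := by
  rcases a with i | ⟨j, b⟩ <;> simp [Letter.inv]

theorem invWord_cons (a : Letter s t) (v : List (Letter s t)) :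
    invWord (a :: v) = invWord v ++ [a.inv] := by
  simp [invWord]

theorem invWord_append (u v : List (Letter s t)) :
    invWord (u ++ v) = invWord v ++ invWord u := by
  simp [invWord]

@[simp]
theorem invWord_invWord (v : List (Letter s t)) : invWord (invWord v) = v := by
  simp [invWord, List.map_reverse, Function.comp_def]

@[simp]
theorem length_invWord (v : List (Letter s t)) : (invWord v).length = v.length := by
  simp [invWord]

@[simp]
theorem invWord_eq_nil {v : List (Letter s t)} : invWord v = [] ↔ v = [] := by
  simp [invWord]

theorem redWord_invWord {w : List (Letter s t)} : RedWord (invWord w) ↔ RedWord w := by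
  rw [redWord_iff, redWord_iff, invWord, List.isChain_map, List.isChain_reverse]
  simp only [Letter.inv_inv, ne_comm]

theorem head?_invWord (v : List (Letter s t)) :
    (invWord v).head? = v.getLast?.map Letter.inv := by
  simp [invWord]

theorem eq_nil_of_redWord_invWord_append {v : List (Letter s t)}
    (hv : RedWord (invWord v ++ v)) : v = [] := by
  cases v with
  | nil => rfl
  | cons a v =>
    rw [invWord_cons, redWord_iff, List.isChain_append] at hv
    exact absurd (Letter.inv_inv a).symm (hv.2.2 a.inv (by simp) a (by simp))

theorem head?_ne_head?_invWord {c : List (Letter s t)} (hc : c ≠ []) (hcc : RedWord (c ++ c)) :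
    c.head? ≠ (invWord c).head? := by
  rw [redWord_iff, List.isChain_append] at hcc
  intro h
  rw [head?_invWord, List.getLast?_eq_some_getLast hc, Option.map_some] at h
  exact hcc.2.2 _ (List.getLast?_eq_some_getLast hc) _ h rfl

theorem redWord_of_val_eq_append (ω : Boundary s t) {l : List (Letter s t)}
    {r : Stream' (Letter s t)} (h : ω.1 = l ++ₛ r) : RedWord l := by
  refine List.isChain_iff_getElem.2 fun i hi => ?_
  have hω := ω.2 i
  rw [h] at hω
  have hi₀ : (l ++ₛ r) i = l[i] := Stream'.get_append_left _ _ _ (by omega)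
  have hi₁ : (l ++ₛ r) (i + 1) = l[i + 1] := Stream'.get_append_left _ _ _ hi
  rwa [hi₀, hi₁] at hω

theorem eq_of_eq_append_append_invWord {g p c p' c' : List (Letter s t)}
    (h : g = p ++ c ++ invWord p) (h' : g = p' ++ c' ++ invWord p')
    (hc : c ≠ []) (hcc : RedWord (c ++ c)) (hc' : c' ≠ []) (hcc' : RedWord (c' ++ c')) :
    p = p' ∧ c = c' := by
  have hinv : ∀ {p c : List (Letter s t)}, g = p ++ c ++ invWord p →
      invWord g = p ++ (invWord c ++ invWord p) := by
    rintro p c rfl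
    simp [invWord_append, List.append_assoc]
  -- `p` is the longest common prefix of `g` and `g⁻¹`: the next letters differ by cyclic reduction.
  obtain rfl : p = p' := by
    refine List.eq_of_append_eq_of_head?_ne (x := c ++ invWord p) (x' := c' ++ invWord p')
      (by simpa [List.append_assoc] using h.symm.trans h') ((hinv h).symm.trans (hinv h')) ?_ ?_
    · rw [List.head?_append_of_ne_nil _ hc, List.head?_append_of_ne_nil _ (by simpa)]
      exact head?_ne_head?_invWord hc hcc
    · rw [List.head?_append_of_ne_nil _ hc', List.head?_append_of_ne_nil _ (by simpa)]
      exact head?_ne_head?_invWord hc' hcc'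
  have hmid := h.symm.trans h'
  rw [List.append_assoc, List.append_assoc] at hmid
  exact ⟨rfl, List.append_cancel_right (List.append_cancel_left hmid)⟩

end Words

section Action

variable {s t : ℕ}

theorem prepend_of_eq {a : Letter s t} {ω : Boundary s t} (h : ω.1 0 = a.inv) :
    prepend a ω = shift ω :=
  dif_pos h

theorem val_prepend_of_ne {a : Letter s t} {ω : Boundary s t} (h : ω.1 0 ≠ a.inv) :
    (prepend a ω).1 = Stream'.cons a ω.1 := by
  have hprepend : prepend a ω = _ := dif_neg h
  rw [hprepend]
  funext k
  cases k <;> rfl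

theorem exists_act_eq_append {g : List (Letter s t)} (hg : RedWord g) (ω : Boundary s t) :
    ∃ u v r, g = u ++ v ∧ ω.1 = invWord v ++ₛ r ∧ (act g ω).1 = u ++ₛ r := by
  induction g with
  | nil => exact ⟨[], [], ω.1, rfl, rfl, rfl⟩
  | cons a g ih =>
    obtain ⟨u, v, r, rfl, hω, hact⟩ := ih hg.tail
    have hact_cons : act (a :: (u ++ v)) ω = prepend a (act (u ++ v) ω) := rfl
    cases u with
    | cons b u =>
      have hb : (act (b :: u ++ v) ω).1 0 ≠ a.inv := by
        rw [hact]
        exact (List.isChain_cons.1 hg).1 b rfl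
      exact ⟨a :: b :: u, v, r, rfl, hω, by rw [hact_cons, val_prepend_of_ne hb, hact]; rfl⟩
    | nil =>
      by_cases hr : r 0 = a.inv
      · refine ⟨[], a :: v, Stream'.tail r, rfl, ?_, ?_⟩
        · rw [hω, invWord_cons, Stream'.append_append_stream]
          congr 1
          rw [← hr]
          exact (Stream'.eta r).symm
        · rw [hact_cons, prepend_of_eq (by rw [hact]; exact hr)]
          exact congrArg Stream'.tail hact
      · have hr' : (act ([] ++ v) ω).1 0 ≠ a.inv := by rw [hact]; exact hr
        exact ⟨[a], v, r, rfl, hω, by rw [hact_cons, val_prepend_of_ne hr', hact]; rfl⟩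

theorem exists_eq_append_of_act_eq {g : List (Letter s t)} (hg : RedWord g) (hg' : g ≠ [])
    {ω : Boundary s t} (hω : act g ω = ω) :
    ∃ p c r, g = p ++ c ++ invWord p ∧ c ≠ [] ∧ RedWord (c ++ c) ∧ ω.1 = p ++ₛ r ∧
      (r = c ++ₛ r ∨ r = invWord c ++ₛ r) := by
  obtain ⟨u, v, r, rfl, hωv, hωu⟩ := exists_act_eq_append hg ω
  rw [hω] at hωu
  have huv : u ≠ invWord v := by
    rintro rfl
    exact hg' (by simp [eq_nil_of_redWord_invWord_append hg])
  have hcyclic : ∀ {p c : List (Letter s t)}, ω.1 = p ++ₛ r → r = c ++ₛ r → RedWord (c ++ c) :=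
    fun {p c} hp hr => by
      have hred := redWord_of_val_eq_append ω (l := p ++ (c ++ c)) (r := r) (by
        rw [hp, Stream'.append_append_stream, Stream'.append_append_stream, ← hr, ← hr])
      exact (redWord_iff.1 hred).right_of_append
  rcases le_total u.length v.length with hle | hle
  · obtain ⟨c, hv, hr⟩ :=
      Stream'.exists_eq_append_of_append_eq_append (hωu.symm.trans hωv) (by simpa using hle)
    refine ⟨u, invWord c, r, ?_, ?_, ?_, hωu, Or.inr (by rwa [invWord_invWord])⟩
    · rw [← invWord_invWord v, hv, invWord_append, List.append_assoc]
    · rw [Ne, invWord_eq_nil]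
      rintro rfl
      exact huv (by simpa using hv.symm)
    · rw [← invWord_append, redWord_invWord]
      exact hcyclic hωu hr
  · obtain ⟨c, hu, hr⟩ :=
      Stream'.exists_eq_append_of_append_eq_append (hωv.symm.trans hωu) (by simpa using hle)
    refine ⟨invWord v, c, r, by rw [hu, invWord_invWord], ?_, hcyclic hωv hr, hωv, Or.inl hr⟩
    rintro rfl
    exact huv (by simpa using hu)

theorem val_eq_or_of_act_eq {g p c : List (Letter s t)} (hg : RedWord g) (hg' : g ≠ [])
    (hdec : g = p ++ c ++ invWord p) (hc : c ≠ []) (hcc : RedWord (c ++ c))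
    {ω : Boundary s t} (hω : act g ω = ω) :
    ω.1 = p ++ₛ Stream'.cycle c hc ∨
      ω.1 = p ++ₛ Stream'.cycle (invWord c) (mt invWord_eq_nil.1 hc) := by
  obtain ⟨p', c', r, hdec', hc', hcc', hωr, hr⟩ := exists_eq_append_of_act_eq hg hg' hω
  obtain ⟨rfl, rfl⟩ := eq_of_eq_append_append_invWord hdec hdec' hc hcc hc' hcc'
  rw [hωr]
  exact hr.imp (fun hr => congrArg (p ++ₛ ·) (Stream'.eq_cycle_of_eq_append hc hr))
    (fun hr => congrArg (p ++ₛ ·) (Stream'.eq_cycle_of_eq_append _ hr))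

theorem nonempty_boundary (h : 2 ≤ s ∨ 1 ≤ t) : Nonempty (Boundary s t) := by
  rcases h with hs | ht
  · exact ⟨⟨fun k => .inl ⟨k % 2, by omega⟩, fun k => by simp [Letter.inv]; omega⟩⟩
  · exact ⟨⟨fun _ => .inr (⟨0, ht⟩, true), fun k => by simp [Letter.inv]⟩⟩

end Action

/-- For a nontrivial `g ∈ Γ`, the set of boundary points fixed by
`g` contains at most two points (the attracting and repelling endpoints `g^{±∞}` when
they exist); in particular the fixed-point set is finite. -/
theorem fixedPoints_subset_pair (s t n : ℕ) (hn : 2 ≤ n) (hst : s + 2 * t = n + 1)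
    (g : List (Letter s t)) (hg : RedWord g) (hg' : g ≠ []) :
    (∃ p q : Boundary s t, {ω : Boundary s t | act g ω = ω} ⊆ {p, q}) ∧
      {ω : Boundary s t | act g ω = ω}.Finite := by
  have hne : Nonempty (Boundary s t) := nonempty_boundary (by omega)
  obtain ⟨A, B, hAB⟩ : ∃ A B : Stream' (Letter s t),
      ∀ ω ∈ {ω : Boundary s t | act g ω = ω}, ω.1 = A ∨ ω.1 = B := by
    by_cases h : ∃ ω₀ : Boundary s t, act g ω₀ = ω₀
    · obtain ⟨ω₀, h₀⟩ := h
      obtain ⟨p, c, -, hdec, hc, hcc, -⟩ := exists_eq_append_of_act_eq hg hg' h₀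
      exact ⟨_, _, fun ω hω => val_eq_or_of_act_eq hg hg' hdec hc hcc hω⟩
    · obtain ⟨ω₀⟩ := hne
      exact ⟨ω₀.1, ω₀.1, fun ω hω => (h ⟨ω, hω⟩).elim⟩
  obtain ⟨p, q, hpq⟩ := Function.Injective.exists_subset_pair
    (f := fun ω : Boundary s t => ω.1) Subtype.val_injective hAB
  exact ⟨⟨p, q, hpq⟩, (Set.toFinite {p, q}).subset hpq⟩
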